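/- For the star graph S_n, the number of distinct Pak-Stanley labels (equivalently, distinct outcomes of the S_n-Three Rows Game) equals (n+2)·2^{n-1}. Equivalently: sum over all subsets S ⊆ {1,...,n} of (n+1-|S|) equals (n+2)·2^{n-1}. -/

import Mathlib

/-!
An outcome is determined by its top count `k` (how many columns chose `0`) and its support
`S` (the columns that chose their bottom square), and every pair with `k + |S| ≤ n` occurs.
So there are `n + 1 - |S|` outcomes with support `S`. Pairing `S` with its complement, the two
counts add up to `n + 2`, whence twice the sum is `(n + 2) · 2ⁿ`.
-/

/-- The outcome of a history of the `S_n`-Three Rows Game: column `j : Fin n` has top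
square (`h j = 0`) labelled `0`, blank middle square (`h j = 1`), and bottom square
(`h j = 2`) labelled `j + 1`.  The outcome is recorded as a counting function on ℕ. -/
def soutcome (n : ℕ) (h : Fin n → Fin 3) : ℕ → ℕ := fun i =>
  if i = 0 then (Finset.univ.filter (fun j : Fin n => h j = 0)).card
  else (Finset.univ.filter (fun j : Fin n => h j = 2 ∧ (j : ℕ) + 1 = i)).card

open Finset

theorem two_mul_sum_card_add_one_sub_card (α : Type*) [Fintype α] [DecidableEq α] :
    2 * ∑ S : Finset α, (Fintype.card α + 1 - #S) =
      (Fintype.card α + 2) * 2 ^ Fintype.card α := by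
  have hcompl : ∑ S : Finset α, (Fintype.card α + 1 - #Sᶜ) =
      ∑ S : Finset α, (Fintype.card α + 1 - #S) :=
    Fintype.sum_bijective _ compl_involutive.bijective _ _ fun _ => rfl
  have hpair (S : Finset α) : Fintype.card α + 1 - #S + (Fintype.card α + 1 - #Sᶜ) =
      Fintype.card α + 2 := by
    have hS := S.card_le_univ
    rw [card_compl]
    omega
  rw [two_mul]
  nth_rw 2 [← hcompl]
  rw [← sum_add_distrib, Fintype.sum_congr _ _ hpair, sum_const, card_univ, Fintype.card_finset,
    smul_eq_mul, mul_comm]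

namespace StarThreeRows

variable {n : ℕ}

def outcome (S : Finset (Fin n)) (k : ℕ) : ℕ → ℕ := fun i =>
  if i = 0 then k else #(S.filter fun j : Fin n => (j : ℕ) + 1 = i)

theorem outcome_succ (S : Finset (Fin n)) (k : ℕ) (j : Fin n) :
    outcome S k (j + 1) = if j ∈ S then 1 else 0 := by
  simp only [outcome, Nat.add_one_ne_zero, if_false, add_left_inj, Fin.val_inj, filter_eq']
  split_ifs <;> rfl

theorem outcome_injective :
    Function.Injective fun p : (_ : Finset (Fin n)) × ℕ => outcome p.1 p.2 := by
  rintro ⟨S, k⟩ ⟨S', k'⟩ heq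
  have hmem (j : Fin n) : j ∈ S ↔ j ∈ S' := by
    have := congrFun heq (j + 1)
    simp only [outcome_succ] at this
    split_ifs at this <;> simp_all
  obtain rfl : S = S' := Finset.ext hmem
  obtain rfl : k = k' := congrFun heq 0
  rfl

theorem soutcome_eq_outcome (h : Fin n → Fin 3) :
    soutcome n h = outcome (univ.filter (h · = 2)) #(univ.filter (h · = 0)) := by
  funext i
  simp only [soutcome, outcome, filter_filter]

theorem exists_soutcome_eq_outcome {S : Finset (Fin n)} {k : ℕ} (hk : k + #S ≤ n) :
    ∃ h, soutcome n h = outcome S k := by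
  obtain ⟨T, hTS, rfl⟩ : ∃ T ⊆ Sᶜ, #T = k :=
    exists_subset_card_eq (by rw [card_compl, Fintype.card_fin]; omega)
  have hdisj : ∀ j ∈ T, j ∉ S := fun j hj => mem_compl.mp (hTS hj)
  let h : Fin n → Fin 3 := fun j => if j ∈ S then 2 else if j ∈ T then 0 else 1
  have hbottom : univ.filter (h · = 2) = S := by
    ext j
    by_cases hS : j ∈ S <;> by_cases hT : j ∈ T <;> simp [h, hS, hT]
  have htop : univ.filter (h · = 0) = T := by
    ext j
    by_cases hS : j ∈ S <;> by_cases hT : j ∈ T <;> simp_all [h]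
  exact ⟨h, by rw [soutcome_eq_outcome, hbottom, htop]⟩

theorem card_top_add_card_bottom_le (h : Fin n → Fin 3) :
    #(univ.filter (h · = 0)) + #(univ.filter (h · = 2)) ≤ n := by
  have hsub : univ.filter (h · = 0) ⊆ (univ.filter (h · = 2))ᶜ := by
    intro j
    simp_all
  have hle := card_le_card hsub
  have huniv := (univ.filter (h · = 2)).card_le_univ
  rw [card_compl] at hle
  rw [Fintype.card_fin] at hle huniv
  omega

def admissible (n : ℕ) : Finset ((_ : Finset (Fin n)) × ℕ) :=
  univ.sigma fun S => range (n + 1 - #S)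

theorem range_soutcome :
    Set.range (soutcome n) =
      (fun p : (_ : Finset (Fin n)) × ℕ => outcome p.1 p.2) '' admissible n := by
  ext f
  simp only [Set.mem_range, Set.mem_image, mem_coe, admissible, mem_sigma, mem_univ, true_and,
    mem_range]
  constructor
  · rintro ⟨h, rfl⟩
    have hcard := card_top_add_card_bottom_le h
    exact ⟨⟨univ.filter (h · = 2), #(univ.filter (h · = 0))⟩, by dsimp only; omega,
      (soutcome_eq_outcome h).symm⟩
  · rintro ⟨⟨S, k⟩, hk, rfl⟩
    have hS := S.card_le_univ
    rw [Fintype.card_fin] at hS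
    exact exists_soutcome_eq_outcome (by omega)

theorem card_range_soutcome :
    Nat.card (Set.range (soutcome n)) = ∑ S : Finset (Fin n), (n + 1 - #S) := by
  rw [range_soutcome, Nat.card_coe_set_eq, Set.ncard_image_of_injective _ outcome_injective,
    Set.ncard_coe_finset, admissible, card_sigma]
  simp only [card_range]

end StarThreeRows

/-- The number of distinct Pak-Stanley labels for the star graph `S_n` (distinct outcomes
of the `S_n`-Three Rows Game) is `(n+2)·2^(n-1)`; equivalently
`∑_{S ⊆ [n]} (n + 1 - |S|) = (n+2)·2^(n-1)`. -/
theorem star_label_count (n : ℕ) (hn : 1 ≤ n) :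
    Nat.card (Set.range (soutcome n)) = (n + 2) * 2 ^ (n - 1) ∧
    ∑ S ∈ (Finset.univ : Finset (Fin n)).powerset, (n + 1 - S.card)
      = (n + 2) * 2 ^ (n - 1) := by
  have hsum : ∑ S ∈ (Finset.univ : Finset (Fin n)).powerset, (n + 1 - S.card)
      = (n + 2) * 2 ^ (n - 1) := by
    have h := two_mul_sum_card_add_one_sub_card (Fin n)
    rw [Fintype.card_fin, ← Nat.sub_add_cancel hn, pow_succ, Nat.sub_add_cancel hn] at h
    rw [powerset_univ]
    linarith
  exact ⟨StarThreeRows.card_range_soutcome.trans (by rwa [← powerset_univ]), hsum⟩
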